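/- Let a¹², a²¹, a²² be real numbers with a²² < 0 and a¹²a²¹ < 0 (the stability conditions with a¹¹ = 0). Then for every r > 0, the information-thermodynamic efficiency η_Y(r) = (a²²)² r / ( (a¹²)² − 2a¹²a²¹ r + r((a²²)² + (a²¹)² r) ) satisfies η_Y(r) ≤ (a²²)² / ( (a²²)² − 4a¹²a²¹ ), with equality if and only if r = −a¹²/a²¹. -/
import Mathlib


/-- Steady-state information-thermodynamic efficiency `η_Y` for the bipartite linear Langevin
system with `a¹¹ = 0`, as a function of the noise-intensity ratio `r = T^X / T^Y`. -/
noncomputable def etaY0 (a12 a21 a22 r : ℝ) : ℝ :=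
  a22 ^ 2 * r / (a12 ^ 2 - 2 * a12 * a21 * r + r * (a22 ^ 2 + a21 ^ 2 * r))

/-- The optimal information-thermodynamic efficiency: under the stability conditions with
`a¹¹ = 0`, for every `r > 0` one has `η_Y(r) ≤ (a²²)² / ((a²²)² − 4a¹²a²¹)`, with equality
if and only if `r = −a¹²/a²¹`. -/
theorem etaY0_le_optimal (a12 a21 a22 : ℝ) (h22 : a22 < 0) (h1221 : a12 * a21 < 0) :
    ∀ r : ℝ, 0 < r →
      etaY0 a12 a21 a22 r ≤ a22 ^ 2 / (a22 ^ 2 - 4 * a12 * a21) ∧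
        (etaY0 a12 a21 a22 r = a22 ^ 2 / (a22 ^ 2 - 4 * a12 * a21) ↔ r = -a12 / a21) := by
  intro r hr
  have ha21 : a21 ≠ 0 := by
    intro h; rw [h, mul_zero] at h1221; exact lt_irrefl 0 h1221
  have ha22 : a22 ≠ 0 := ne_of_lt h22
  have hC : 0 < a22 ^ 2 - 4 * a12 * a21 := by nlinarith [sq_nonneg a22, pow_pos (abs_pos.mpr ha22) 2]
  have hDpos : 0 < a12 ^ 2 - 2 * a12 * a21 * r + r * (a22 ^ 2 + a21 ^ 2 * r) := by
    nlinarith [sq_nonneg (a12 + a21 * r), mul_pos hC hr]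
  unfold etaY0
  refine ⟨?_, ?_, ?_⟩
  · rw [div_le_div_iff₀ hDpos hC]
    nlinarith [mul_nonneg (sq_nonneg a22) (sq_nonneg (a12 + a21 * r))]
  · intro h
    rw [div_eq_div_iff hDpos.ne' hC.ne'] at h
    have hq : a22 ^ 2 * (a12 + a21 * r) ^ 2 = 0 := by linear_combination -h
    have h0 : a12 + a21 * r = 0 := by
      rcases mul_eq_zero.mp hq with h' | h'
      · exact absurd h' (pow_ne_zero 2 ha22)
      · exact pow_eq_zero_iff two_ne_zero |>.mp h'
    field_simp
    linarith
  · intro h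
    subst h
    rw [div_eq_div_iff hDpos.ne' hC.ne']
    field_simp
    ring
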